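/- arXiv:2112.02427 — 3 statements merged into one kernel-verified Lean document; each statement's English description precedes it below -/
import Mathlib

section
/- (Claim A of the lower bound) Suppose a sequence of queries Q_1,…,Q_t over universe N solves Group Testing under any feedback capped at α, meaning any two distinct subsets of N of size at most k yield different feedback vectors, where feedback on query Q for hidden set K depends only on Q ∩ K and takes a single fixed value whenever |Q ∩ K| > α. Then for every set K with |K| ≤ k and every x ∈ K there exists an index τ with x ∈ Q_τ and |K ∩ Q_τ| ≤ α + 1. -/
theorem capped_feedback_inter_erase_eq {N β : Type*} [DecidableEq N] {α : ℕ}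
    {F : Finset N → β} {v : β} (hcap : ∀ S : Finset N, α < S.card → F S = v)
    {Q K : Finset N} {x : N} (hQ : x ∈ Q → α + 1 < (K ∩ Q).card) :
    F (Q ∩ K.erase x) = F (Q ∩ K) := by
  rw [Finset.inter_erase]
  by_cases hx : x ∈ Q ∩ K
  · have hlarge : α + 1 < (Q ∩ K).card := Finset.inter_comm K Q ▸ hQ (Finset.mem_inter.mp hx).1
    rw [hcap _ (by rw [Finset.card_erase_of_mem hx]; omega), hcap _ (by omega)]
  · rw [Finset.erase_eq_of_notMem hx]

open scoped Classical in
theorem claimA_lower_bound_general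
    {N : Type*} [DecidableEq N] {β : Type*}
    (t k α : ℕ)
    (Q : Fin t → Finset N)
    (F : Finset N → β) (v : β)
    (hcap : ∀ S : Finset N, α < S.card → F S = v)
    (hsolves : ∀ K1 K2 : Finset N, K1.card ≤ k → K2.card ≤ k →
      (∀ i : Fin t, F (Q i ∩ K1) = F (Q i ∩ K2)) → K1 = K2) :
    ∀ K : Finset N, K.card ≤ k → ∀ x ∈ K,
      ∃ τ : Fin t, x ∈ Q τ ∧ (K ∩ Q τ).card ≤ α + 1 := by
  intro K hK x hx
  by_contra! hlarge
  have herase : K.erase x = K :=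
    hsolves _ _ (Finset.card_erase_le.trans hK) hK fun i =>
      capped_feedback_inter_erase_eq hcap (hlarge i)
  exact Finset.notMem_erase x K (herase.symm ▸ hx)

open scoped Classical in
/-- Claim A of the lower bound: under any feedback capped at `α`, every element of
any hidden set `K` of size at most `k` belongs to some query intersecting `K` in at
most `α + 1` elements. -/
theorem claimA_lower_bound
    {N : Type*} [Fintype N] [DecidableEq N] {β : Type*}
    (t k α : ℕ) (hk : 0 < k)
    (Q : Fin t → Finset N)
    (F : Finset N → β) (v : β)
    (hcap : ∀ S : Finset N, α < S.card → F S = v)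
    (hsolves : ∀ K1 K2 : Finset N, K1.card ≤ k → K2.card ≤ k →
      (∀ i : Fin t, F (Q i ∩ K1) = F (Q i ∩ K2)) → K1 = K2) :
    ∀ K : Finset N, K.card ≤ k → ∀ x ∈ K,
      ∃ τ : Fin t, x ∈ Q τ ∧ (K ∩ Q τ).card ≤ α + 1 :=
  claimA_lower_bound_general t k α Q F v hcap hsolves
end

section
/- (Balanced IDs decoding) For any element v of [n], define its balanced ID as the binary vector of length 2·log₂ n obtained by concatenating the binary representations of v and n−v (each in log₂ n bits); then the balanced ID has exactly log₂ n ones. Moreover, the sum (coordinatewise over ℤ) of two or more distinct balanced IDs either contains an entry ≥ 2 or has more than log₂ n ones; hence no such sum equals any single balanced ID. -/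
/-- The balanced ID of `v ∈ {0,…,2^m−1}`: a 0/1-vector of length `2m`, the
concatenation of the `m`-bit binary representations of `v` and of `2^m − 1 − v`. -/
def balancedID (m v : ℕ) : Fin (2 * m) → ℕ :=
  fun i => if (i : ℕ) < m then (v.testBit i).toNat
           else ((2 ^ m - 1 - v).testBit ((i : ℕ) - m)).toNat

/-!
In the second half of a balanced ID every bit of the first half is complemented, so each
balanced ID has weight exactly `m`, and a sum over a set `S` of them has weight `m · #S`.
If `#S ≥ 2` and no entry of the sum exceeds `1`, its weight is its number of nonzero
entries, which is then at least `2m > m`. A single balanced ID has weight `m`, so it is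
never such a sum.
-/

lemma Finset.card_filter_one_le_eq_sum {ι : Type*} (s : Finset ι) {f : ι → ℕ}
    (hf : ∀ i ∈ s, f i ≤ 1) : (s.filter fun i => 1 ≤ f i).card = ∑ i ∈ s, f i := by
  rw [Finset.card_filter]
  refine Finset.sum_congr rfl fun i hi => ?_
  have := hf i hi
  split <;> omega

lemma Nat.testBit_two_pow_sub_one_sub {m v i : ℕ} (hv : v < 2 ^ m) (hi : i < m) :
    (2 ^ m - 1 - v).testBit i = !v.testBit i := by
  rw [show 2 ^ m - 1 - v = 2 ^ m - (v + 1) by omega, Nat.testBit_two_pow_sub_succ hv]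
  simp [hi]

lemma balancedID_le_one (m v : ℕ) (i : Fin (2 * m)) : balancedID m v i ≤ 1 := by
  unfold balancedID
  split <;> exact Bool.toNat_le _

lemma sum_balancedID {m v : ℕ} (hv : v < 2 ^ m) : ∑ i, balancedID m v i = m := by
  simp only [balancedID]
  rw [Fin.sum_univ_eq_sum_range (fun j => if j < m then (v.testBit j).toNat
      else ((2 ^ m - 1 - v).testBit (j - m)).toNat), two_mul, Finset.sum_range_add,
    ← Finset.sum_add_distrib]
  have bit_add_complement : ∀ j ∈ Finset.range m,
      (if j < m then (v.testBit j).toNat else ((2 ^ m - 1 - v).testBit (j - m)).toNat) +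
      (if m + j < m then (v.testBit (m + j)).toNat
        else ((2 ^ m - 1 - v).testBit (m + j - m)).toNat) = 1 := by
    intro j hj
    rw [Finset.mem_range] at hj
    rw [if_pos hj, if_neg (by omega), Nat.add_sub_cancel_left,
      Nat.testBit_two_pow_sub_one_sub hv hj]
    cases v.testBit j <;> rfl
  rw [Finset.sum_congr rfl bit_add_complement, Finset.sum_const, Finset.card_range, smul_eq_mul,
    mul_one]

lemma card_filter_balancedID_eq_one {m v : ℕ} (hv : v < 2 ^ m) :
    (Finset.univ.filter fun i : Fin (2 * m) => balancedID m v i = 1).card = m := calc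
  _ = (Finset.univ.filter fun i => 1 ≤ balancedID m v i).card := by
    refine congrArg _ (Finset.filter_congr fun i _ => ?_)
    have := balancedID_le_one m v i
    omega
  _ = ∑ i, balancedID m v i :=
    Finset.card_filter_one_le_eq_sum _ fun i _ => balancedID_le_one m v i
  _ = m := sum_balancedID hv

lemma sum_sum_balancedID (m : ℕ) {S : Finset ℕ} (hS : ∀ v ∈ S, v < 2 ^ m) :
    ∑ i, ∑ v ∈ S, balancedID m v i = m * S.card := by
  rw [Finset.sum_comm, Finset.sum_congr rfl fun v hv => sum_balancedID (hS v hv),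
    Finset.sum_const, smul_eq_mul, mul_comm]

open scoped Classical in
/-- Balanced IDs have exactly `m` ones, and the coordinatewise sum of two or more
distinct balanced IDs either has an entry `≥ 2` or has more than `m` nonzero
coordinates; hence no such sum equals any single balanced ID. -/
theorem balancedID_decoding (m : ℕ) (hm : 0 < m) :
    (∀ v < 2 ^ m,
      (Finset.univ.filter (fun i : Fin (2 * m) => balancedID m v i = 1)).card = m) ∧
    (∀ S : Finset ℕ, (∀ v ∈ S, v < 2 ^ m) → 2 ≤ S.card →
      ((∃ i : Fin (2 * m), 2 ≤ ∑ v ∈ S, balancedID m v i) ∨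
        m < (Finset.univ.filter
          (fun i : Fin (2 * m) => 1 ≤ ∑ v ∈ S, balancedID m v i)).card) ∧
      (∀ w < 2 ^ m, (fun i => ∑ v ∈ S, balancedID m v i) ≠ balancedID m w)) := by
  refine ⟨fun v hv => card_filter_balancedID_eq_one hv, fun S hS hcard => ?_⟩
  have weight_gt : m < ∑ i, ∑ v ∈ S, balancedID m v i := by
    rw [sum_sum_balancedID m hS]
    nlinarith
  refine ⟨?_, fun w hw hsum => ?_⟩
  · by_cases h : ∃ i : Fin (2 * m), 2 ≤ ∑ v ∈ S, balancedID m v i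
    · exact Or.inl h
    · simp only [not_exists, not_le] at h
      right
      rwa [Finset.card_filter_one_le_eq_sum _ fun i _ => Nat.le_of_lt_succ (h i)]
  · rw [hsum, sum_balancedID hw] at weight_gt
    exact lt_irrefl m weight_gt
end

section
/- (Symmetric-difference reduction) Suppose every nonempty set S ⊆ N with |S| ≤ 2k admits a query Q in the sequence with |Q ∩ S| = 1 and |Q| ≤ α. Then for any two distinct sets K1, K2 ⊆ N with |K1|, |K2| ≤ k, the feedback vectors under F_α(X) = min(|X|, α) differ, i.e., there is a query Q with min(|Q ∩ K1|, α) ≠ min(|Q ∩ K2|, α). -/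
/-!
A query `Q` with `|Q| ≤ α` meeting `K1 ∆ K2` in exactly one point sees `K1` and `K2` with
counts of different parity, since `|Q ∩ K1| + |Q ∩ K2| ≡ |Q ∩ (K1 ∆ K2)| (mod 2)`; both counts
are at most `α`, so the cap `min · α` does not identify them. Such a query exists because
`K1 ∆ K2` is nonempty and has at most `2k` elements.
-/

open Finset
open scoped symmDiff

namespace Finset

variable {ι : Type*} [DecidableEq ι]

theorem card_symmDiff_add_two_mul_card_inter (s t : Finset ι) :
    #(s ∆ t) + 2 * #(s ∩ t) = #s + #t := by
  have hsub : s ∩ t ⊆ s ∪ t := inter_subset_left.trans subset_union_left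
  rw [symmDiff_eq_sup_sdiff_inf, sup_eq_union, inf_eq_inter, card_sdiff_of_subset hsub,
    ← card_union_add_card_inter]
  have := card_le_card hsub
  omega

theorem card_ne_card_of_odd_card_symmDiff {s t : Finset ι} (h : Odd #(s ∆ t)) : #s ≠ #t := by
  intro hst
  obtain ⟨m, hm⟩ := h
  have := card_symmDiff_add_two_mul_card_inter s t
  omega

theorem card_inter_ne_card_inter_of_card_inter_symmDiff_eq_one {q s t : Finset ι}
    (h : #(q ∩ s ∆ t) = 1) : #(q ∩ s) ≠ #(q ∩ t) := by
  have hdistrib : q ∩ s ∆ t = (q ∩ s) ∆ (q ∩ t) := inf_symmDiff_distrib_left q s t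
  exact card_ne_card_of_odd_card_symmDiff (by rw [← hdistrib, h]; exact odd_one)

end Finset

open scoped Classical in
theorem symmDiff_reduction_general
    {N : Type*} [DecidableEq N]
    (t k α : ℕ)
    (Q : Fin t → Finset N)
    (hhit : ∀ S : Finset N, S ≠ ∅ → S.card ≤ 2 * k →
      ∃ i : Fin t, (Q i ∩ S).card = 1 ∧ (Q i).card ≤ α) :
    ∀ K1 K2 : Finset N, K1.card ≤ k → K2.card ≤ k → K1 ≠ K2 →
      ∃ i : Fin t, min (Q i ∩ K1).card α ≠ min (Q i ∩ K2).card α := by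
  intro K1 K2 hK1 hK2 hne
  have hcard : #(K1 ∆ K2) ≤ 2 * k := by
    have := card_symmDiff_add_two_mul_card_inter K1 K2
    omega
  obtain ⟨i, hone, hQα⟩ := hhit _ (symmDiff_eq_empty.not.mpr hne) hcard
  refine ⟨i, ?_⟩
  rw [min_eq_left ((card_le_card inter_subset_left).trans hQα),
    min_eq_left ((card_le_card inter_subset_left).trans hQα)]
  exact card_inter_ne_card_inter_of_card_inter_symmDiff_eq_one hone

open scoped Classical in
/-- Symmetric-difference reduction: if every nonempty set of size at most `2k` is
hit exactly once by some query of size at most `α`, then the capped feedback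
vectors of any two distinct sets of size at most `k` differ. -/
theorem symmDiff_reduction
    {N : Type*} [Fintype N] [DecidableEq N]
    (t k α : ℕ)
    (Q : Fin t → Finset N)
    (hhit : ∀ S : Finset N, S ≠ ∅ → S.card ≤ 2 * k →
      ∃ i : Fin t, (Q i ∩ S).card = 1 ∧ (Q i).card ≤ α) :
    ∀ K1 K2 : Finset N, K1.card ≤ k → K2.card ≤ k → K1 ≠ K2 →
      ∃ i : Fin t, min (Q i ∩ K1).card α ≠ min (Q i ∩ K2).card α :=
  symmDiff_reduction_general t k α Q hhit
end
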